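/- For the category of partitions C = ⟨⨯, ⊓⊓⟩ generated by the crossing partition and the four block partition, F(C) equals the commutator subgroup of Z_2^{*∞}; in particular the quotient Z_2^{*∞}/F(C) is isomorphic to the direct sum of countably many copies of Z_2. -/

import Mathlib

open Classical

/-- A partition diagram with `upper` upper points and `lower` lower points; the blocks are
encoded by the equivalence relation (setoid) on the disjoint union of the points. -/
structure PartitionDiagram where
  upper : ℕ
  lower : ℕ
  rel : Setoid (Fin upper ⊕ Fin lower)

namespace PartitionDiagram

/-- The partition determined by a labelling of the points: two points lie in the same block
iff they receive the same label. -/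
def ofLabels {u l : ℕ} (f : Fin u ⊕ Fin l → ℕ) : PartitionDiagram :=
  ⟨u, l, Setoid.ker f⟩

/-- The identity partition `| ∈ P(1,1)`. -/
def idPartition : PartitionDiagram := ofLabels (u := 1) (l := 1) fun _ => 0

/-- The pair partition `⊓ ∈ P(0,2)`. -/
def pairPartition : PartitionDiagram := ofLabels (u := 0) (l := 2) fun _ => 0

/-- The four block partition `⊓⊓ ∈ P(0,4)`. -/
def fourBlock : PartitionDiagram := ofLabels (u := 0) (l := 4) fun _ => 0

/-- The singleton partition `↑ ∈ P(0,1)`. -/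
def singletonPartition : PartitionDiagram := ofLabels (u := 0) (l := 1) fun _ => 0

/-- The double singleton partition `↑⊗↑ ∈ P(0,2)`. -/
def doubleSingleton : PartitionDiagram :=
  ofLabels (u := 0) (l := 2) (Sum.elim (fun i => (i : ℕ)) fun j => (j : ℕ))

/-- The crossing partition `⨯ ∈ P(2,2)`, with blocks `{1,2'}` and `{2,1'}`. -/
def crossing : PartitionDiagram :=
  ofLabels (u := 2) (l := 2) (Sum.elim (fun i => (i : ℕ)) fun j => 1 - (j : ℕ))

/-- The pair positioner partition `▷ ∈ P(3,3)`, with blocks `{1,2,2',3'}` and `{3,1'}`. -/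
def pairPositioner : PartitionDiagram :=
  ofLabels (u := 3) (l := 3)
    (Sum.elim (fun i => if (i : ℕ) = 2 then 1 else 0) fun j => if (j : ℕ) = 0 then 1 else 0)

/-- The partition `k_l ∈ P(l+2, l+2)` consisting of the four block `{1, 1', l+2, (l+2)'}`
together with the pairs `{j, j'}` for `2 ≤ j ≤ l+1`. -/
def kPart (n : ℕ) : PartitionDiagram :=
  ofLabels (u := n + 2) (l := n + 2)
    (fun x => if (Sum.elim Fin.val Fin.val x) = 0 ∨ (Sum.elim Fin.val Fin.val x) = n + 1
      then 0 else Sum.elim Fin.val Fin.val x)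

/-- The involution `p* ∈ P(l,k)` of `p ∈ P(k,l)`: turn the partition upside down. -/
def invol (p : PartitionDiagram) : PartitionDiagram :=
  ⟨p.lower, p.upper, Setoid.comap Sum.swap p.rel⟩

/-- Auxiliary map splitting the points of a tensor product into the points of the two factors. -/
def splitPoint {a b c d : ℕ} (x : Fin (a + b) ⊕ Fin (c + d)) :
    (Fin a ⊕ Fin c) ⊕ (Fin b ⊕ Fin d) :=
  match x with
  | Sum.inl u =>
    match finSumFinEquiv.symm u with
    | Sum.inl i => Sum.inl (Sum.inl i)
    | Sum.inr i => Sum.inr (Sum.inl i)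
  | Sum.inr v =>
    match finSumFinEquiv.symm v with
    | Sum.inl j => Sum.inl (Sum.inr j)
    | Sum.inr j => Sum.inr (Sum.inr j)

/-- The tensor product (horizontal concatenation) `p ⊗ q` of two partitions. -/
def tensor (p q : PartitionDiagram) : PartitionDiagram :=
  ⟨p.upper + q.upper, p.lower + q.lower,
    Setoid.ker fun x =>
      Sum.map (Quotient.mk p.rel) (Quotient.mk q.rel) (splitPoint x)⟩

section Composition

variable (p q : PartitionDiagram) (h : p.lower = q.upper)

/-- Inclusion of the points of `p` into the three-row diagram used for composition. -/
def iotaP : Fin p.upper ⊕ Fin p.lower → Fin p.upper ⊕ (Fin p.lower ⊕ Fin q.lower) :=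
  Sum.map id Sum.inl

/-- Inclusion of the points of `q` into the three-row diagram used for composition,
identifying the upper points of `q` with the lower points of `p`. -/
def iotaQ : Fin q.upper ⊕ Fin q.lower → Fin p.upper ⊕ (Fin p.lower ⊕ Fin q.lower) :=
  fun x => Sum.inr (Sum.map (Fin.cast h.symm) id x)

/-- The generating relation on the three-row diagram used for composition. -/
def compRel : Fin p.upper ⊕ (Fin p.lower ⊕ Fin q.lower) →
    Fin p.upper ⊕ (Fin p.lower ⊕ Fin q.lower) → Prop :=
  fun x y =>
    (∃ a b, p.rel.r a b ∧ x = iotaP p q a ∧ y = iotaP p q b) ∨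
    (∃ a b, q.rel.r a b ∧ x = iotaQ p q h a ∧ y = iotaQ p q h b)

/-- The composition (vertical concatenation) `qp ∈ P(k,m)` of `p ∈ P(k,l)` and `q ∈ P(l,m)`:
identify the lower points of `p` with the upper points of `q`, take the join of the block
structures and restrict to the upper points of `p` and the lower points of `q`. -/
def comp : PartitionDiagram :=
  ⟨p.upper, q.lower,
    Setoid.comap (Sum.map id Sum.inr) (Relation.EqvGen.setoid (compRel p q h))⟩

end Composition

/-- Rotation of the leftmost upper point to the leftmost lower position. -/
def rotLU (p : PartitionDiagram) (h : 0 < p.upper) : PartitionDiagram :=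
  ⟨p.upper - 1, p.lower + 1,
    Setoid.comap (fun x => match x with
      | Sum.inl j => Sum.inl (⟨(j : ℕ) + 1, by have := j.isLt; omega⟩ : Fin p.upper)
      | Sum.inr j => if hj : (j : ℕ) = 0 then Sum.inl (⟨0, h⟩ : Fin p.upper)
          else Sum.inr (⟨(j : ℕ) - 1, by have := j.isLt; omega⟩ : Fin p.lower)) p.rel⟩

/-- Rotation of the leftmost lower point to the leftmost upper position. -/
def rotLD (p : PartitionDiagram) (h : 0 < p.lower) : PartitionDiagram :=
  ⟨p.upper + 1, p.lower - 1,
    Setoid.comap (fun x => match x with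
      | Sum.inl j => if hj : (j : ℕ) = 0 then Sum.inr (⟨0, h⟩ : Fin p.lower)
          else Sum.inl (⟨(j : ℕ) - 1, by have := j.isLt; omega⟩ : Fin p.upper)
      | Sum.inr j => Sum.inr (⟨(j : ℕ) + 1, by have := j.isLt; omega⟩ : Fin p.lower)) p.rel⟩

/-- Rotation of the rightmost upper point to the rightmost lower position. -/
def rotRU (p : PartitionDiagram) (h : 0 < p.upper) : PartitionDiagram :=
  ⟨p.upper - 1, p.lower + 1,
    Setoid.comap (fun x => match x with
      | Sum.inl j => Sum.inl (⟨(j : ℕ), by have := j.isLt; omega⟩ : Fin p.upper)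
      | Sum.inr j => if hj : (j : ℕ) < p.lower then Sum.inr (⟨(j : ℕ), hj⟩ : Fin p.lower)
          else Sum.inl (⟨p.upper - 1, by omega⟩ : Fin p.upper)) p.rel⟩

/-- Rotation of the rightmost lower point to the rightmost upper position. -/
def rotRD (p : PartitionDiagram) (h : 0 < p.lower) : PartitionDiagram :=
  ⟨p.upper + 1, p.lower - 1,
    Setoid.comap (fun x => match x with
      | Sum.inl j => if hj : (j : ℕ) < p.upper then Sum.inl (⟨(j : ℕ), hj⟩ : Fin p.upper)
          else Sum.inr (⟨p.lower - 1, by omega⟩ : Fin p.lower)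
      | Sum.inr j => Sum.inr (⟨(j : ℕ), by have := j.isLt; omega⟩ : Fin p.lower)) p.rel⟩

/-- The partition obtained from `p` by merging the block of the point `a` and the block of
the point `b` into a single block, leaving all other blocks unchanged. -/
noncomputable def mergeBlocks (p : PartitionDiagram)
    (a b : Fin p.upper ⊕ Fin p.lower) : PartitionDiagram :=
  ⟨p.upper, p.lower,
    Setoid.ker fun x =>
      if p.rel.r x a ∨ p.rel.r x b then (none : Option (Quotient p.rel))
      else some (Quotient.mk p.rel x)⟩

end PartitionDiagram

open PartitionDiagram

/-- A set of partitions is a category of partitions if it contains the identity partition and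
the pair partition and is closed under tensor products, composition, involution and the four
rotation operations. -/
structure IsPartitionCategory (M : Set PartitionDiagram) : Prop where
  id_mem : idPartition ∈ M
  pair_mem : pairPartition ∈ M
  tensor_mem : ∀ p ∈ M, ∀ q ∈ M, tensor p q ∈ M
  comp_mem : ∀ p ∈ M, ∀ q ∈ M, ∀ h : p.lower = q.upper, comp p q h ∈ M
  invol_mem : ∀ p ∈ M, invol p ∈ M
  rotLU_mem : ∀ p ∈ M, ∀ h : 0 < p.upper, rotLU p h ∈ M
  rotLD_mem : ∀ p ∈ M, ∀ h : 0 < p.lower, rotLD p h ∈ M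
  rotRU_mem : ∀ p ∈ M, ∀ h : 0 < p.upper, rotRU p h ∈ M
  rotRD_mem : ∀ p ∈ M, ∀ h : 0 < p.lower, rotRD p h ∈ M

/-- A category of partitions is group-theoretical if it contains the pair positioner
partition `▷`. -/
def IsGroupTheoreticalCategory (M : Set PartitionDiagram) : Prop :=
  IsPartitionCategory M ∧ pairPositioner ∈ M

/-- The smallest category of partitions containing a given set of partitions. -/
def generatedCategory (S : Set PartitionDiagram) : Set PartitionDiagram :=
  ⋂₀ { M | IsPartitionCategory M ∧ S ⊆ M }

/-- The group `Z_2^{*∞}`: the free product of countably many copies of the cyclic group of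
order two. -/
abbrev FreeZ2 := Monoid.CoprodI (fun _ : ℕ => Multiplicative (ZMod 2))

/-- The free generators `a_1, a_2, …` of `Z_2^{*∞}`, each of order two. -/
def gen (n : ℕ) : FreeZ2 :=
  Monoid.CoprodI.of (i := n) (Multiplicative.ofAdd (1 : ZMod 2))

/-- A labelling of a partition assigns (indices of) pairwise distinct generators of
`Z_2^{*∞}` to the blocks: two points receive the same label iff they lie in the same block. -/
def IsLabelling (p : PartitionDiagram) (lab : Fin p.upper ⊕ Fin p.lower → ℕ) : Prop :=
  ∀ x y, lab x = lab y ↔ p.rel.r x y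

/-- The word `w(p,l) ∈ Z_2^{*∞}` of a labelled partition: after rotating all upper points to
the right-hand end of the lower row, read off the generators assigned to the points from left
to right, i.e. read the lower points from left to right and then the upper points from right
to left. -/
def wordOf (p : PartitionDiagram) (lab : Fin p.upper ⊕ Fin p.lower → ℕ) : FreeZ2 :=
  ((List.ofFn fun j : Fin p.lower => gen (lab (Sum.inr j))) ++
    (List.ofFn fun i : Fin p.upper => gen (lab (Sum.inl i))).reverse).prod

/-- `F(C) ⊆ Z_2^{*∞}` is the set of all `w(p,l)` where `p ∈ C` and `l` is a labelling. -/
def Fmap (M : Set PartitionDiagram) : Set FreeZ2 :=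
  { g | ∃ p ∈ M, ∃ lab, IsLabelling p lab ∧ wordOf p lab = g }

/-- The set of partitions admitting a labelling whose word lies in `H`. -/
def catOf (H : Set FreeZ2) : Set PartitionDiagram :=
  { p | ∃ lab, IsLabelling p lab ∧ wordOf p lab ∈ H }

/-- The endomorphism of `Z_2^{*∞}` identifying letters according to `f`, i.e. sending
`a_k` to `a_{f k}` for every `k`. -/
def identifyLetters (f : ℕ → ℕ) : Monoid.End FreeZ2 :=
  Monoid.CoprodI.lift fun i =>
    (Monoid.CoprodI.of (M := fun _ : ℕ => Multiplicative (ZMod 2)) (i := f i))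

/-- The strong symmetric semigroup `sS_∞`: the subsemigroup of `End(Z_2^{*∞})` generated by
the finite identifications of letters. -/
def strongSymmetricSemigroup : Subsemigroup (Monoid.End FreeZ2) :=
  Subsemigroup.closure
    { φ | ∃ f : ℕ → ℕ, (∃ n : ℕ, ∀ k, n ≤ k → f k = k) ∧ φ = identifyLetters f }

/-- A subset of `Z_2^{*∞}` is `sS_∞`-invariant if it is preserved by every element of the
strong symmetric semigroup. -/
def IsSSInvariant (H : Set FreeZ2) : Prop :=
  ∀ φ ∈ strongSymmetricSemigroup, ∀ g ∈ H, φ g ∈ H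

/-- A partition is in single leg form if it has no upper points and no two consecutive
points belong to the same block. -/
def IsSingleLeg (p : PartitionDiagram) : Prop :=
  p.upper = 0 ∧
    ∀ i j : Fin p.lower, (j : ℕ) = (i : ℕ) + 1 → ¬ p.rel.r (Sum.inr i) (Sum.inr j)

/-- `C_sl`: the set of all partitions in `C` with no upper points in single leg form. -/
def slSet (M : Set PartitionDiagram) : Set PartitionDiagram :=
  { p ∈ M | IsSingleLeg p }

/-- The partition with no upper points determined by a word (a list of letters): two points
lie in the same block iff the corresponding letters coincide. -/
def wordPartition (w : List ℕ) : PartitionDiagram :=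
  ofLabels (u := 0) (l := w.length) (Sum.elim (fun i => (i : ℕ)) fun j => w.get j)

/-- The canonical letter of the block of a lower point: the least index of a point in its
block. -/
noncomputable def blockLabel (p : PartitionDiagram) (j : Fin p.lower) : ℕ :=
  sInf { i : ℕ | ∃ h : i < p.lower, p.rel.r (Sum.inr ⟨i, h⟩) (Sum.inr j) }

/-- The canonical word of a partition with no upper points. -/
noncomputable def canonWord (p : PartitionDiagram) : List ℕ :=
  List.ofFn fun j : Fin p.lower => blockLabel p j

/-- Full reduction of a word over an alphabet of involutions: repeatedly delete adjacent
equal pairs of letters.  This computes the result of iterating the operation replacing every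
exponent in the run-decomposition of the word by its parity. -/
def reduceWord (w : List ℕ) : List ℕ :=
  w.foldr (fun x acc => match acc with
    | [] => [x]
    | y :: rest => if x = y then rest else x :: y :: rest) []

/-- The single leg version of a partition with no upper points: the unique partition in
single leg form obtained by iteratively replacing every exponent in its run-decomposition by
its parity. -/
noncomputable def singleLegVersion (p : PartitionDiagram) : PartitionDiagram :=
  wordPartition (reduceWord (canonWord p))


/-!
Every partition in `⟨⨯, ⊓⊓⟩` has only blocks of even size: this holds for `|`, `⊓`, `⨯` and `⊓⊓`,
and it survives involution and rotations (which only relabel the points), tensor products, and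
composition, since a block of `qp` is what is left of a union of blocks of `p` and a union of
blocks of `q` once the middle row, shared by both unions, is removed. Hence every letter occurs an
even number of times in `w(p,l)`, which says exactly that `w(p,l)` vanishes in the abelianization
`⊕_ℕ Z_2` of `Z_2^{*∞}`. Conversely, a word in which every letter occurs an even number of times is
a permutation of `a^{2k} w'` with `a ∉ w'`. The partition of `a^{2k}` arises from `⊓` by repeated
composition with the rotated four block in `P(1,3)`, that of `a^{2k} w'` is a tensor product, and
permuting letters is composing with tensor products of `⨯` and identities.
-/

namespace Monoid.CoprodI

variable {ι : Type*} [DecidableEq ι] {A : ι → Type*} [∀ i, AddCommGroup (A i)]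

def toDirectSum : CoprodI (fun i => Multiplicative (A i)) →* Multiplicative (DirectSum ι A) :=
  lift fun i => AddMonoidHom.toMultiplicative (DirectSum.of A i)

theorem toDirectSum_of {i : ι} (a : Multiplicative (A i)) :
    toDirectSum (of a) = .ofAdd (DirectSum.of A i a.toAdd) :=
  lift_of _ _

def abelianizationEquivDirectSum :
    Abelianization (CoprodI fun i => Multiplicative (A i)) ≃* Multiplicative (DirectSum ι A) :=
  MonoidHom.toMulEquiv (Abelianization.lift toDirectSum)
    (AddMonoidHom.toMultiplicativeLeft (DirectSum.toAddMonoid fun i =>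
      (Abelianization.of.comp (of (M := fun i => Multiplicative (A i)) (i := i))).toAdditiveRight))
    (by
      refine Abelianization.hom_ext _ _ (ext_hom _ _ fun i => MonoidHom.ext fun g => ?_)
      simp [toDirectSum_of])
    (by
      refine Multiplicative.monoidHom_ext _ _ (DirectSum.addHom_ext fun i g => ?_)
      simp [toDirectSum_of])

theorem toDirectSum_eq_one_iff (g : CoprodI fun i => Multiplicative (A i)) :
    toDirectSum g = 1 ↔ g ∈ commutator (CoprodI fun i => Multiplicative (A i)) := by
  rw [← Abelianization.ker_of, MonoidHom.mem_ker,
    ← map_eq_one_iff _ abelianizationEquivDirectSum.injective]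
  rfl

end Monoid.CoprodI

open Monoid.CoprodI in
theorem toAdd_toDirectSum_prod_gen (L : List ℕ) (n : ℕ) :
    (toDirectSum (L.map gen).prod).toAdd n = L.count n := by
  induction L with
  | nil => simp
  | cons a L ih =>
    rw [List.map_cons, List.prod_cons, map_mul, toAdd_mul, DirectSum.add_apply, ih, gen,
      toDirectSum_of, List.count_cons]
    by_cases h : a = n
    · subst h; simp [add_comm]
    · simp [DirectSum.of_eq_of_ne _ _ _ (Ne.symm h), h]

theorem prod_gen_mem_commutator_iff (L : List ℕ) :
    (L.map gen).prod ∈ commutator FreeZ2 ↔ ∀ n, Even (L.count n) := by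
  rw [← Monoid.CoprodI.toDirectSum_eq_one_iff, ← toAdd_eq_zero, DFinsupp.ext_iff]
  simp [toAdd_toDirectSum_prod_gen, ZMod.natCast_eq_zero_iff_even]

theorem exists_list_prod_gen (g : FreeZ2) : ∃ L : List ℕ, (L.map gen).prod = g := by
  induction g using Monoid.CoprodI.induction_on with
  | one => exact ⟨[], rfl⟩
  | of i m =>
    obtain rfl | rfl : m = 1 ∨ m = .ofAdd 1 := by revert m; decide
    · exact ⟨[], by simp⟩
    · exact ⟨[i], by simp [gen]⟩
  | mul x y hx hy =>
    obtain ⟨L, rfl⟩ := hx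
    obtain ⟨L', rfl⟩ := hy
    exact ⟨L ++ L', by simp⟩

open Finset

theorem Finset.card_filter_univ_sum {α β : Type*} [Fintype α] [Fintype β] (P : α ⊕ β → Prop)
    [DecidablePred P] :
    #{z | P z} = #{a | P (.inl a)} + #{b | P (.inr b)} := by
  rw [← card_toLeft_add_card_toRight]
  congr 2 <;> ext <;> simp

theorem List.count_ofFn {α : Type*} [DecidableEq α] {n : ℕ} (f : Fin n → α) (a : α) :
    (List.ofFn f).count a = #{i | f i = a} := by
  rw [← Multiset.coe_count, ← Fin.univ_val_map, Multiset.count_map, Finset.card_def]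
  simp [Finset.filter_val, eq_comm]

namespace Setoid

variable {α β : Type*} [Fintype α] [Fintype β]

def EvenClasses (r : Setoid α) : Prop := ∀ x, Even #{y | r x y}

theorem EvenClasses.even_card {r : Setoid α} (hr : r.EvenClasses) (s : Finset α)
    (hs : ∀ x ∈ s, ∀ y, r x y → y ∈ s) : Even #s := by
  induction s using Finset.strongInduction with
  | H s ih =>
    rcases s.eq_empty_or_nonempty with rfl | ⟨x, hx⟩
    · simp
    have hsub : ({y | r x y} : Finset α) ⊆ s := fun y hy => hs x hx y (mem_filter.1 hy).2
    rw [← card_sdiff_add_card_eq_card hsub]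
    have hx' : x ∈ ({y | r x y} : Finset α) := mem_filter.2 ⟨mem_univ x, r.refl x⟩
    refine (ih _ (sdiff_ssubset hsub ⟨x, hx'⟩) fun y hy z hyz => ?_).add (hr x)
    simp only [mem_sdiff, mem_filter, mem_univ, true_and] at hy ⊢
    exact ⟨hs y hy.1 z hyz, fun hxz => hy.2 (r.trans hxz (r.symm hyz))⟩

theorem EvenClasses.comap {r : Setoid β} (hr : r.EvenClasses) {f : α → β} (hf : f.Bijective) :
    (r.comap f).EvenClasses := fun x => by
  rw [card_equiv (Equiv.ofBijective f hf) (t := {y | r (f x) y}) (by simp [Setoid.comap_rel])]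
  exact hr (f x)

theorem EvenClasses.ker_sumMap {r : Setoid α} {s : Setoid β} (hr : r.EvenClasses)
    (hs : s.EvenClasses) : (ker (Sum.map (Quotient.mk r) (Quotient.mk s))).EvenClasses := by
  rintro (a | b) <;> rw [card_filter_univ_sum]
  · simpa [ker_def, Quotient.eq] using hr a
  · simpa [ker_def, Quotient.eq] using hs b

end Setoid

def finSumMap {m m' n n' : ℕ} (σ : Fin n → Fin m) (τ : Fin n' → Fin m') :
    Fin (n + n') → Fin (m + m') :=
  finSumFinEquiv ∘ Sum.map σ τ ∘ finSumFinEquiv.symm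

namespace PartitionDiagram

theorem ofLabels_eq_ofLabels {u l : ℕ} {f g : Fin u ⊕ Fin l → ℕ}
    (h : ∀ x y, f x = f y ↔ g x = g y) : ofLabels f = ofLabels g := by
  unfold ofLabels
  congr 1
  exact Setoid.ext h

theorem evenClasses_ofLabels_iff {u l : ℕ} (f : Fin u ⊕ Fin l → ℕ) :
    (ofLabels f).rel.EvenClasses ↔ ∀ x, Even #{y | f x = f y} :=
  forall_congr' fun _ => by congr! 3

def splitPointEquiv {a b c d : ℕ} :
    Fin (a + b) ⊕ Fin (c + d) ≃ (Fin a ⊕ Fin c) ⊕ (Fin b ⊕ Fin d) :=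
  (Equiv.sumCongr finSumFinEquiv.symm finSumFinEquiv.symm).trans (Equiv.sumSumSumComm _ _ _ _)

theorem coe_splitPointEquiv {a b c d : ℕ} :
    ⇑(splitPointEquiv (a := a) (b := b) (c := c) (d := d)) = splitPoint := by
  ext (u | v)
  · cases h : finSumFinEquiv.symm u <;> simp [splitPointEquiv, splitPoint, h]
  · cases h : finSumFinEquiv.symm v <;> simp [splitPointEquiv, splitPoint, h]

section EvenClasses

variable {p q : PartitionDiagram}

theorem evenClasses_tensor (hp : p.rel.EvenClasses) (hq : q.rel.EvenClasses) :
    (tensor p q).rel.EvenClasses :=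
  (hp.ker_sumMap hq).comap (coe_splitPointEquiv ▸ Equiv.bijective _)

theorem evenClasses_invol (hp : p.rel.EvenClasses) : (invol p).rel.EvenClasses :=
  hp.comap (Equiv.sumComm _ _).bijective

theorem evenClasses_rotLU (h : 0 < p.upper) (hp : p.rel.EvenClasses) :
    (rotLU p h).rel.EvenClasses := by
  dsimp only [rotLU]
  refine hp.comap ((Fintype.bijective_iff_injective_and_card _).2 ⟨?_, ?_⟩)
  · rintro (a | a) (b | b) hab <;> dsimp only at hab <;> (try split_ifs at hab) <;>
      simp only [Sum.inl.injEq, Sum.inr.injEq, Fin.ext_iff, reduceCtorEq] at * <;> omega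
  · simp only [Fintype.card_sum, Fintype.card_fin]
    omega

theorem evenClasses_rotLD (h : 0 < p.lower) (hp : p.rel.EvenClasses) :
    (rotLD p h).rel.EvenClasses := by
  dsimp only [rotLD]
  refine hp.comap ((Fintype.bijective_iff_injective_and_card _).2 ⟨?_, ?_⟩)
  · rintro (a | a) (b | b) hab <;> dsimp only at hab <;> (try split_ifs at hab) <;>
      simp only [Sum.inl.injEq, Sum.inr.injEq, Fin.ext_iff, reduceCtorEq] at * <;> omega
  · simp only [Fintype.card_sum, Fintype.card_fin]
    omega

theorem evenClasses_rotRU (h : 0 < p.upper) (hp : p.rel.EvenClasses) :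
    (rotRU p h).rel.EvenClasses := by
  dsimp only [rotRU]
  refine hp.comap ((Fintype.bijective_iff_injective_and_card _).2 ⟨?_, ?_⟩)
  · rintro (a | a) (b | b) hab <;> dsimp only at hab <;> (try split_ifs at hab) <;>
      simp only [Sum.inl.injEq, Sum.inr.injEq, Fin.ext_iff, reduceCtorEq] at * <;> omega
  · simp only [Fintype.card_sum, Fintype.card_fin]
    omega

theorem evenClasses_rotRD (h : 0 < p.lower) (hp : p.rel.EvenClasses) :
    (rotRD p h).rel.EvenClasses := by
  dsimp only [rotRD]
  refine hp.comap ((Fintype.bijective_iff_injective_and_card _).2 ⟨?_, ?_⟩)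
  · rintro (a | a) (b | b) hab <;> dsimp only at hab <;> (try split_ifs at hab) <;>
      simp only [Sum.inl.injEq, Sum.inr.injEq, Fin.ext_iff, reduceCtorEq] at * <;> omega
  · simp only [Fintype.card_sum, Fintype.card_fin]
    omega

theorem evenClasses_comp (h : p.lower = q.upper) (hp : p.rel.EvenClasses)
    (hq : q.rel.EvenClasses) : (comp p q h).rel.EvenClasses := by
  obtain ⟨k, l, r⟩ := p
  obtain ⟨l', m, s⟩ := q
  dsimp only at h
  subst h
  intro x
  let joined := Relation.EqvGen (compRel ⟨k, l, r⟩ ⟨l, m, s⟩ rfl) (Sum.map id .inr x)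
  have hP : Even #{z | joined (Sum.map id .inl z)} := hp.even_card _ fun z hz w hzw => by
    simp only [mem_filter, mem_univ, true_and] at hz ⊢
    exact hz.trans _ _ _ (.rel _ _ (.inl ⟨z, w, hzw, rfl, rfl⟩))
  have hQ : Even #{z | joined (.inr z)} := hq.even_card _ fun z hz w hzw => by
    simp only [mem_filter, mem_univ, true_and] at hz ⊢
    refine hz.trans _ _ _ (.rel _ _ (.inr ⟨z, w, hzw, ?_, ?_⟩)) <;> cases z <;> cases w <;> rfl
  -- the parities of the upper and the lower part of the block both agree with the middle part
  rw [card_filter_univ_sum] at hP hQ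
  change Even #{y | joined (Sum.map id .inr y)}
  rw [card_filter_univ_sum]
  simp only [Sum.map_inl, Sum.map_inr, id] at hP hQ ⊢
  rw [Nat.even_add] at hP hQ ⊢
  tauto

end EvenClasses

end PartitionDiagram

theorem isPartitionCategory_evenClasses :
    IsPartitionCategory {p : PartitionDiagram | p.rel.EvenClasses} where
  id_mem := (evenClasses_ofLabels_iff _).2 (by decide)
  pair_mem := (evenClasses_ofLabels_iff _).2 (by decide)
  tensor_mem _ hp _ hq := evenClasses_tensor hp hq
  comp_mem _ hp _ hq h := evenClasses_comp h hp hq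
  invol_mem _ hp := evenClasses_invol hp
  rotLU_mem _ hp h := evenClasses_rotLU h hp
  rotLD_mem _ hp h := evenClasses_rotLD h hp
  rotRU_mem _ hp h := evenClasses_rotRU h hp
  rotRD_mem _ hp h := evenClasses_rotRD h hp

theorem isPartitionCategory_generatedCategory (S : Set PartitionDiagram) :
    IsPartitionCategory (generatedCategory S) where
  id_mem _ hM := hM.1.id_mem
  pair_mem _ hM := hM.1.pair_mem
  tensor_mem _ hp _ hq _ hM := hM.1.tensor_mem _ (hp _ hM) _ (hq _ hM)
  comp_mem _ hp _ hq h _ hM := hM.1.comp_mem _ (hp _ hM) _ (hq _ hM) h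
  invol_mem _ hp _ hM := hM.1.invol_mem _ (hp _ hM)
  rotLU_mem _ hp h _ hM := hM.1.rotLU_mem _ (hp _ hM) h
  rotLD_mem _ hp h _ hM := hM.1.rotLD_mem _ (hp _ hM) h
  rotRU_mem _ hp h _ hM := hM.1.rotRU_mem _ (hp _ hM) h
  rotRD_mem _ hp h _ hM := hM.1.rotRD_mem _ (hp _ hM) h

theorem subset_generatedCategory (S : Set PartitionDiagram) : S ⊆ generatedCategory S :=
  fun _ hp _ hM => hM.2 hp

theorem generatedCategory_subset {S M : Set PartitionDiagram} (hM : IsPartitionCategory M)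
    (hS : S ⊆ M) : generatedCategory S ⊆ M :=
  fun _ hp => hp M ⟨hM, hS⟩

theorem evenClasses_of_mem_generatedCategory {p : PartitionDiagram}
    (hp : p ∈ generatedCategory {crossing, fourBlock}) : p.rel.EvenClasses := by
  refine generatedCategory_subset isPartitionCategory_evenClasses ?_ hp
  rintro _ (rfl | rfl) <;> exact (evenClasses_ofLabels_iff _).2 (by decide)

def wordLetters (p : PartitionDiagram) (lab : Fin p.upper ⊕ Fin p.lower → ℕ) : List ℕ :=
  (List.ofFn fun j => lab (.inr j)) ++ (List.ofFn fun i => lab (.inl i)).reverse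

theorem wordOf_eq_prod_wordLetters (p : PartitionDiagram) (lab : Fin p.upper ⊕ Fin p.lower → ℕ) :
    wordOf p lab = ((wordLetters p lab).map gen).prod := by
  simp [wordOf, wordLetters, List.map_ofFn, Function.comp_def]

theorem count_wordLetters (p : PartitionDiagram) (lab : Fin p.upper ⊕ Fin p.lower → ℕ) (n : ℕ) :
    (wordLetters p lab).count n = #{x | lab x = n} := by
  rw [wordLetters, List.count_append, List.count_reverse, List.count_ofFn, List.count_ofFn,
    add_comm, card_filter_univ_sum (lab · = n)]

theorem wordOf_mem_commutator {p : PartitionDiagram} (hp : p.rel.EvenClasses)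
    {lab : Fin p.upper ⊕ Fin p.lower → ℕ} (hlab : IsLabelling p lab) :
    wordOf p lab ∈ commutator FreeZ2 := by
  rw [wordOf_eq_prod_wordLetters, prod_gen_mem_commutator_iff]
  intro n
  rw [count_wordLetters]
  by_cases hn : ∃ x, lab x = n
  · obtain ⟨x, rfl⟩ := hn
    convert hp x using 3
    exact hlab _ _ |>.trans ⟨p.rel.symm, p.rel.symm⟩
  · simp [not_exists.mp hn]

namespace PartitionDiagram

def graph {m n : ℕ} (σ : Fin n → Fin m) : PartitionDiagram :=
  ofLabels (u := m) (l := n) fun x => ((Sum.elim id σ x : Fin m) : ℕ)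

def lowerPartition {n : ℕ} (f : Fin n → ℕ) : PartitionDiagram :=
  ofLabels (u := 0) (l := n) (Sum.elim (fun i => (i : ℕ)) f)

theorem comp_graph (p : PartitionDiagram) {n : ℕ} (σ : Fin n → Fin p.lower) :
    comp p (graph σ) rfl = ⟨p.upper, n, p.rel.comap (Sum.map id σ)⟩ := by
  let retract : Fin p.upper ⊕ (Fin p.lower ⊕ Fin n) → Fin p.upper ⊕ Fin p.lower :=
    Sum.elim .inl (Sum.elim .inr (.inr ∘ σ))
  have key : ∀ z w, Relation.EqvGen (compRel p (graph σ) rfl) z w ↔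
      p.rel (retract z) (retract w) := by
    refine fun z w => ⟨fun hzw => ?_, fun hzw => ?_⟩
    · induction hzw with
      | rel z w hzw =>
        rcases hzw with ⟨a, b, hab, rfl, rfl⟩ | ⟨a, b, hab, rfl, rfl⟩
        · rcases a with a | a <;> rcases b with b | b <;> exact hab
        · have retract_iotaQ : ∀ c, retract (iotaQ p (graph σ) rfl c) = .inr (Sum.elim id σ c) := by
            rintro (c | c) <;> rfl
          rw [retract_iotaQ, retract_iotaQ, Fin.ext hab]
      | refl => exact p.rel.refl _
      | symm _ _ _ ih => exact p.rel.symm ih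
      | trans _ _ _ _ _ ih₁ ih₂ => exact p.rel.trans ih₁ ih₂
    · have toP : ∀ z, Relation.EqvGen (compRel p (graph σ) rfl) z
          (iotaP p (graph σ) (retract z)) := by
        rintro (u | m | j)
        · exact .refl _
        · exact .refl _
        · exact .rel _ _ (.inr ⟨.inr j, .inl (σ j), rfl, rfl, rfl⟩)
      exact (toP z).trans _ _ _ ((Relation.EqvGen.rel _ _ (.inl ⟨_, _, hzw, rfl, rfl⟩)).trans _ _ _
        (toP w).symm)
  show (⟨p.upper, n, _⟩ : PartitionDiagram) = _
  congr 1
  ext x y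
  rcases x with x | x <;> rcases y with y | y <;> exact key _ _

theorem comp_ofLabels_graph {u m n : ℕ} (f : Fin u ⊕ Fin m → ℕ) (σ : Fin n → Fin m) :
    comp (ofLabels f) (graph σ) rfl = ofLabels (f ∘ Sum.map id σ) :=
  comp_graph (ofLabels f) σ

theorem comp_lowerPartition_graph {m n : ℕ} (f : Fin m → ℕ) (σ : Fin n → Fin m) :
    comp (lowerPartition f) (graph σ) rfl = lowerPartition (f ∘ σ) := by
  refine (comp_ofLabels_graph _ σ).trans (congrArg ofLabels (funext ?_))
  rintro (i | j) <;> rfl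

theorem tensor_ofLabels {a b c d : ℕ} (f : Fin a ⊕ Fin c → ℕ) (g : Fin b ⊕ Fin d → ℕ)
    (h : Fin (a + b) ⊕ Fin (c + d) → ℕ)
    (hh : ∀ w w', h (splitPointEquiv.symm w) = h (splitPointEquiv.symm w') ↔
      Sum.map f g w = Sum.map f g w') :
    tensor (ofLabels f) (ofLabels g) = ofLabels h := by
  show (⟨a + b, c + d, Setoid.ker fun x : Fin (a + b) ⊕ Fin (c + d) =>
    Sum.map (Quotient.mk (Setoid.ker f)) (Quotient.mk (Setoid.ker g)) (splitPoint x)⟩ :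
      PartitionDiagram) = ⟨a + b, c + d, Setoid.ker h⟩
  congr 1
  ext x y
  rw [Setoid.ker_def, Setoid.ker_def, ← coe_splitPointEquiv]
  obtain ⟨w, rfl⟩ := splitPointEquiv.symm.surjective x
  obtain ⟨w', rfl⟩ := splitPointEquiv.symm.surjective y
  rw [hh, Equiv.apply_symm_apply, Equiv.apply_symm_apply]
  rcases w with w | w <;> rcases w' with w' | w' <;> simp [Quotient.eq]

theorem tensor_graph {m m' n n' : ℕ} (σ : Fin n → Fin m) (τ : Fin n' → Fin m') :
    tensor (graph σ) (graph τ) = graph (finSumMap σ τ) := by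
  refine tensor_ofLabels _ _ _ fun w w' => ?_
  rcases w with (i | j) | (i | j) <;> rcases w' with (i' | j') | (i' | j') <;>
    simp [splitPointEquiv, finSumMap] <;> omega

theorem tensor_lowerPartition {n n' : ℕ} (f : Fin n → ℕ) (g : Fin n' → ℕ)
    (hfg : ∀ i j, f i ≠ g j) :
    tensor (lowerPartition f) (lowerPartition g) = lowerPartition (Fin.append f g) := by
  refine tensor_ofLabels _ _ _ fun w w' => ?_
  rcases w with (i | j) | (i | j) <;> rcases w' with (i' | j') | (i' | j') <;>
    first | exact i.elim0 | exact i'.elim0 | simp [splitPointEquiv, hfg, (hfg _ _).symm]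

theorem lowerPartition_congr {m n : ℕ} (h : m = n) {f : Fin m → ℕ} {g : Fin n → ℕ}
    (hfg : ∀ i, f i = g (Fin.cast h i)) : lowerPartition f = lowerPartition g := by
  subst h
  exact congrArg lowerPartition (funext hfg)

theorem wordPartition_ofFn {n : ℕ} (f : Fin n → ℕ) :
    wordPartition (List.ofFn f) = lowerPartition f :=
  lowerPartition_congr List.length_ofFn (List.get_ofFn f)

theorem crossing_eq_graph_rev : crossing = graph (Fin.rev : Fin 2 → Fin 2) :=
  ofLabels_eq_ofLabels fun x y => by
    rcases x with x | x <;> rcases y with y | y <;> simp [Fin.val_rev]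

theorem rotLD_fourBlock : rotLD fourBlock (by decide) = graph (fun _ : Fin 3 => (0 : Fin 1)) := by
  show (⟨1, 3, _⟩ : PartitionDiagram) = ⟨1, 3, _⟩
  congr 1
  ext x y
  exact iff_of_true rfl (congrArg Fin.val (Subsingleton.elim _ _))

theorem append_comp_finSumMap {m m' n n' : ℕ} (f : Fin m → ℕ) (g : Fin m' → ℕ)
    (σ : Fin n → Fin m) (τ : Fin n' → Fin m') :
    Fin.append f g ∘ finSumMap σ τ = Fin.append (f ∘ σ) (g ∘ τ) := by
  ext j
  induction j using Fin.addCases <;> simp [finSumMap]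

end PartitionDiagram

theorem wordOf_wordPartition (L : List ℕ) :
    wordOf (wordPartition L) (Sum.elim (fun i => i) L.get) = (L.map gen).prod := by
  simp [wordOf, wordPartition, ofLabels]

namespace IsPartitionCategory

variable {C : Set PartitionDiagram} (hC : IsPartitionCategory C)
include hC

theorem mem_of_upper_eq_zero_of_lower_eq_zero {p : PartitionDiagram} (hu : p.upper = 0)
    (hl : p.lower = 0) : p ∈ C := by
  obtain ⟨u, l, r⟩ := p
  dsimp only at hu hl
  subst hu hl
  convert hC.comp_mem _ hC.pair_mem _ (hC.invol_mem _ hC.pair_mem) rfl using 1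
  show (⟨0, 0, r⟩ : PartitionDiagram) = ⟨0, 0, _⟩
  congr 1
  ext x
  rcases x with x | x <;> exact x.elim0

theorem graph_id_mem (n : ℕ) : graph (id : Fin n → Fin n) ∈ C := by
  induction n with
  | zero => exact hC.mem_of_upper_eq_zero_of_lower_eq_zero rfl rfl
  | succ n ih =>
    have hid : graph (id : Fin 1 → Fin 1) = idPartition :=
      ofLabels_eq_ofLabels fun x y => by simp [Fin.fin_one_eq_zero]
    have := hC.tensor_mem _ ih _ (hid ▸ hC.id_mem)
    rwa [tensor_graph, show finSumMap (id : Fin n → Fin n) (id : Fin 1 → Fin 1) = id by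
      ext j; simp [finSumMap]] at this

theorem graph_finSumMap_mem {m m' n n' : ℕ} {σ : Fin n → Fin m} {τ : Fin n' → Fin m'}
    (hσ : graph σ ∈ C) (hτ : graph τ ∈ C) : graph (finSumMap σ τ) ∈ C :=
  tensor_graph σ τ ▸ hC.tensor_mem _ hσ _ hτ

theorem lowerPartition_comp_mem {m n : ℕ} {f : Fin m → ℕ} {σ : Fin n → Fin m}
    (hf : lowerPartition f ∈ C) (hσ : graph σ ∈ C) : lowerPartition (f ∘ σ) ∈ C :=
  comp_lowerPartition_graph f σ ▸ hC.comp_mem _ hf _ hσ rfl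

theorem wordPartition_swap_mem (hcross : crossing ∈ C) (A B : List ℕ) (u v : ℕ)
    (h : wordPartition (A ++ u :: v :: B) ∈ C) : wordPartition (A ++ v :: u :: B) ∈ C := by
  have hword : ∀ x y, A ++ x :: y :: B = List.ofFn (Fin.append A.get (Fin.append ![x, y] B.get)) :=
    fun x y => by simp [List.ofFn_fin_append]
  rw [hword, wordPartition_ofFn] at h ⊢
  have hswap : Fin.append A.get (Fin.append ![v, u] B.get) =
      Fin.append A.get (Fin.append ![u, v] B.get) ∘ finSumMap id (finSumMap Fin.rev id) := by
    rw [append_comp_finSumMap, append_comp_finSumMap]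
    congr 2
    ext i
    fin_cases i <;> rfl
  rw [hswap]
  exact hC.lowerPartition_comp_mem h (hC.graph_finSumMap_mem (hC.graph_id_mem _)
    (hC.graph_finSumMap_mem (crossing_eq_graph_rev ▸ hcross) (hC.graph_id_mem _)))

theorem wordPartition_mem_of_perm (hcross : crossing ∈ C) {L L' : List ℕ} (hLL' : L.Perm L')
    (hL : wordPartition L ∈ C) : wordPartition L' ∈ C := by
  suffices ∀ A, wordPartition (A ++ L) ∈ C → wordPartition (A ++ L') ∈ C from this [] hL
  clear hL
  induction hLL' with
  | nil => exact fun _ => id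
  | cons x _ ih => exact fun A h => by simpa using ih (A ++ [x]) (by simpa using h)
  | swap x y l => exact fun A => hC.wordPartition_swap_mem hcross A l y x
  | trans _ _ ih₁ ih₂ => exact fun A => ih₂ A ∘ ih₁ A

theorem lowerPartition_const_mem (hfour : fourBlock ∈ C) (a : ℕ) :
    ∀ n, Even n → lowerPartition (fun _ : Fin n => a) ∈ C
  | 0, _ => hC.mem_of_upper_eq_zero_of_lower_eq_zero rfl rfl
  | 1, h => absurd h (by decide)
  | 2, _ => by
    convert hC.pair_mem using 1
    exact ofLabels_eq_ofLabels fun x y => by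
      rcases x with x | x <;> rcases y with y | y <;> first | exact x.elim0 | exact y.elim0 | simp
  | m + 3, h => by
    have hm : lowerPartition (fun _ : Fin (m + 1) => a) ∈ C :=
      lowerPartition_const_mem hfour a (m + 1) (by simpa [Nat.even_add_one, parity_simps] using h)
    exact hC.lowerPartition_comp_mem hm (σ := finSumMap id fun _ : Fin 3 => (0 : Fin 1))
      (hC.graph_finSumMap_mem (hC.graph_id_mem m) (rotLD_fourBlock ▸ hC.rotLD_mem _ hfour _))

theorem wordPartition_replicate_append_mem (hfour : fourBlock ∈ C) {k : ℕ} (hk : Even k)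
    (a : ℕ) {M : List ℕ} (hM : wordPartition M ∈ C) (ha : a ∉ M) :
    wordPartition (List.replicate k a ++ M) ∈ C := by
  have hdisj : ∀ i j, (fun _ : Fin k => a) i ≠ M.get j :=
    fun _ j (h : a = M.get j) => ha (h ▸ M.get_mem j)
  rw [← List.ofFn_const, ← List.ofFn_get M, ← List.ofFn_fin_append, wordPartition_ofFn,
    ← tensor_lowerPartition _ _ hdisj]
  exact hC.tensor_mem _ (hC.lowerPartition_const_mem hfour a k hk) _ hM

theorem wordPartition_mem_of_even_count (hcross : crossing ∈ C) (hfour : fourBlock ∈ C) :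
    ∀ L : List ℕ, (∀ n, Even (L.count n)) → wordPartition L ∈ C
  | [], _ => hC.mem_of_upper_eq_zero_of_lower_eq_zero rfl rfl
  | a :: T, hL => by
    have hM : wordPartition (T.filter (· ≠ a)) ∈ C := by
      refine wordPartition_mem_of_even_count hcross hfour _ fun n => ?_
      by_cases hn : n = a
      · rw [hn, List.count_eq_zero.2 (by simp)]
        exact .zero
      · rw [List.count_filter (by simpa using hn)]
        simpa [List.count_cons, Ne.symm hn] using hL n
    have hperm : (List.replicate ((a :: T).count a) a ++ T.filter (· ≠ a)).Perm (a :: T) := by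
      simpa [List.filter_eq, List.replicate_succ] using (List.filter_append_perm (· = a) T).cons a
    exact hC.wordPartition_mem_of_perm hcross hperm
      (hC.wordPartition_replicate_append_mem hfour (hL a) a hM (by simp))
  termination_by L => L.length
  decreasing_by exact Nat.lt_succ_of_le (List.length_filter_le _ _)

end IsPartitionCategory

/-- For the category of partitions `C = ⟨⨯, ⊓⊓⟩` generated by the crossing
partition and the four block partition, `F(C)` equals the commutator subgroup of `Z_2^{*∞}`;
in particular `Z_2^{*∞}/F(C)` is isomorphic to the direct sum of countably many copies of
`Z_2`. -/
theorem Fmap_generated_crossing_fourBlock :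
    Fmap (generatedCategory {PartitionDiagram.crossing, PartitionDiagram.fourBlock}) =
      (commutator FreeZ2 : Set FreeZ2) ∧
    Nonempty ((FreeZ2 ⧸ commutator FreeZ2) ≃*
      Multiplicative (DirectSum ℕ fun _ : ℕ => ZMod 2)) := by
  have hC := isPartitionCategory_generatedCategory {crossing, fourBlock}
  have hcross : crossing ∈ generatedCategory {crossing, fourBlock} :=
    subset_generatedCategory _ (by simp)
  have hfour : fourBlock ∈ generatedCategory {crossing, fourBlock} :=
    subset_generatedCategory _ (by simp)
  refine ⟨Set.Subset.antisymm ?_ fun g hg => ?_, ⟨Monoid.CoprodI.abelianizationEquivDirectSum⟩⟩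
  · rintro _ ⟨p, hp, lab, hlab, rfl⟩
    exact wordOf_mem_commutator (evenClasses_of_mem_generatedCategory hp) hlab
  · obtain ⟨L, rfl⟩ := exists_list_prod_gen g
    have hL := (prod_gen_mem_commutator_iff L).1 hg
    exact ⟨wordPartition L, hC.wordPartition_mem_of_even_count hcross hfour L hL, _,
      fun _ _ => Iff.rfl, wordOf_wordPartition L⟩
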